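/- If g : [0,1] → ℝ is continuous, A ⊆ [0,1], f(x) = ∫₀ˣ g(t) dt, and the restriction of g to any set B ⊆ [0,1] with upper box (Minkowski) dimension greater than α ∈ [0,1] is not monotone, then the restriction of f to any set A ⊆ [0,1] with upper box dimension greater than α is neither convex nor concave. -/

import Mathlib

/-!
If `f` is convex on `A`, its slopes between points of `A` increase, and by the mean value theorem
the slope over `[u, v]` is a value `g ξ` with `ξ ∈ (u, v)`. Let `B` consist of the accumulation
points of `A` together with such points `ξ` in the gaps `(u, v)` of `A`. At an accumulation point,
`g` is a limit of slopes over short intervals next to it, so `g` is monotone on `B`. Between any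
two points of `A` lies a point of `B`, hence at every scale `B` meets at least about a third of the
dyadic cells met by `A`, and `ubDim A ≤ ubDim B`. The concave case is the convex one for `-f`.
-/

open Set MeasureTheory Filter

/-- Number of `N`-adic grid intervals `[(j-1)/N^k, j/N^k]` meeting `A`. -/
noncomputable def gridCount (N k : ℕ) (A : Set ℝ) : ℕ :=
  {j : ℕ | 1 ≤ j ∧ j ≤ N ^ k ∧
    (A ∩ Set.Icc (((j : ℝ) - 1) / (N : ℝ) ^ k) ((j : ℝ) / (N : ℝ) ^ k)).Nonempty}.ncard

/-- Upper box (Minkowski) dimension, via dyadic grid counts. -/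
noncomputable def ubDim (A : Set ℝ) : ℝ :=
  Filter.limsup (fun k : ℕ => Real.log (gridCount 2 k A) / (k * Real.log 2)) Filter.atTop

/-- `f` restricted to `A` is convex: it agrees on `A` with a function convex on the convex hull. -/
def ConvexRestr (f : ℝ → ℝ) (A : Set ℝ) : Prop :=
  ∃ h : ℝ → ℝ, ConvexOn ℝ (convexHull ℝ A) h ∧ Set.EqOn f h A

/-- `f` restricted to `A` is concave. -/
def ConcaveRestr (f : ℝ → ℝ) (A : Set ℝ) : Prop :=
  ∃ h : ℝ → ℝ, ConcaveOn ℝ (convexHull ℝ A) h ∧ Set.EqOn f h A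

open Finset in
theorem Finset.card_le_two_of_forall_not_add_two_le {s : Finset ℕ}
    (h : ∀ i ∈ s, ∀ j ∈ s, ¬ i + 2 ≤ j) : #s ≤ 2 := by
  rcases s.eq_empty_or_nonempty with rfl | hs
  · simp
  have hsub : s ⊆ {s.min' hs, s.min' hs + 1} := by
    intro j hj
    have := s.min'_le j hj
    have := h _ (s.min'_mem hs) j hj
    simp only [mem_insert, mem_singleton]
    omega
  exact (card_le_card hsub).trans card_le_two

open Finset in
theorem Finset.card_le_three_mul_add_two {s t : Finset ℕ}
    (h : ∀ i ∈ s, ∀ j ∈ s, i + 2 ≤ j → ∃ l ∈ t, i ≤ l ∧ l ≤ j) : #s ≤ 3 * #t + 2 := by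
  induction t using Finset.induction_on_max generalizing s with
  | empty =>
    exact (card_le_two_of_forall_not_add_two_le fun i hi j hj hij => by
      simpa using h i hi j hj hij).trans (by simp)
  | insert b t hb ih =>
    have hlt : #{i ∈ s | i < b} ≤ 3 * #t + 2 := by
      refine ih fun i hi j hj hij => ?_
      simp only [mem_filter] at hi hj
      obtain ⟨l, hl, hil, hlj⟩ := h i hi.1 j hj.1 hij
      rcases mem_insert.mp hl with rfl | hl
      · omega
      · exact ⟨l, hl, hil, hlj⟩
    have hgt : #{i ∈ s | b < i} ≤ 2 := by
      refine card_le_two_of_forall_not_add_two_le fun i hi j hj hij => ?_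
      simp only [mem_filter] at hi hj
      obtain ⟨l, hl, hil, -⟩ := h i hi.1 j hj.1 hij
      rcases mem_insert.mp hl with rfl | hl
      · omega
      · exact absurd (hb l hl) (by omega)
    have heq : #{i ∈ s | b ≤ i} ≤ #{i ∈ s | b < i} + 1 := by
      refine (card_le_card (s := {i ∈ s | b ≤ i}) (t := insert b {i ∈ s | b < i}) ?_).trans
        (card_insert_le _ _)
      intro i hi
      simp only [mem_filter, mem_insert] at hi ⊢
      rcases hi.2.eq_or_lt with h | h
      · exact Or.inl h.symm
      · exact Or.inr ⟨hi.1, h⟩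
    have := card_filter_add_card_filter_not (s := s) (· < b)
    rw [card_insert_of_notMem fun hbt => lt_irrefl b (hb b hbt)]
    simp only [not_lt] at this
    omega

def gridCell (N k j : ℕ) : Set ℝ := Icc (((j : ℝ) - 1) / (N : ℝ) ^ k) ((j : ℝ) / (N : ℝ) ^ k)

open Classical in
noncomputable def gridIndices (N k : ℕ) (A : Set ℝ) : Finset ℕ :=
  {j ∈ Finset.Icc 1 (N ^ k) | (A ∩ gridCell N k j).Nonempty}

section Grid

open scoped Classical

variable {N k : ℕ} {A B : Set ℝ}

lemma gridCount_eq_card_gridIndices : gridCount N k A = (gridIndices N k A).card := by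
  rw [gridCount, ← Set.ncard_coe_finset]
  congr 1
  ext j
  simp only [gridIndices, Finset.mem_coe, Finset.mem_filter, Finset.mem_Icc, and_assoc]
  rfl

lemma gridCount_le_pow : gridCount N k A ≤ N ^ k := by
  rw [gridCount_eq_card_gridIndices]
  exact (Finset.card_filter_le _ _).trans (by simp)

lemma exists_mem_gridCell (hN : 0 < N) {i j : ℕ} {z : ℝ} (hi : 1 ≤ i) (hij : i ≤ j)
    (hz : z ∈ Icc (((i : ℝ) - 1) / (N : ℝ) ^ k) ((j : ℝ) / (N : ℝ) ^ k)) :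
    ∃ l, i ≤ l ∧ l ≤ j ∧ z ∈ gridCell N k l := by
  have hNk : (0 : ℝ) < (N : ℝ) ^ k := by positivity
  have hi' : (1 : ℝ) ≤ i := by exact_mod_cast hi
  rw [mem_Icc, div_le_iff₀ hNk, le_div_iff₀ hNk] at hz
  have hz0 : 0 ≤ z * (N : ℝ) ^ k := by linarith
  have hceil_le : ⌈z * (N : ℝ) ^ k⌉₊ ≤ j := Nat.ceil_le.mpr hz.2
  refine ⟨max i ⌈z * (N : ℝ) ^ k⌉₊, le_max_left _ _, max_le hij hceil_le, ?_⟩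
  rw [gridCell, mem_Icc, div_le_iff₀ hNk, le_div_iff₀ hNk]
  rcases le_total ⌈z * (N : ℝ) ^ k⌉₊ i with h | h
  · have h' : (⌈z * (N : ℝ) ^ k⌉₊ : ℝ) ≤ i := by exact_mod_cast h
    rw [max_eq_left h]
    exact ⟨hz.1, (Nat.le_ceil _).trans h'⟩
  · rw [max_eq_right h]
    exact ⟨by linarith [Nat.ceil_lt_add_one hz0], Nat.le_ceil _⟩

lemma lt_of_mem_gridCell (hN : 0 < N) {i j : ℕ} {a b : ℝ} (ha : a ∈ gridCell N k i)
    (hb : b ∈ gridCell N k j) (hij : i + 2 ≤ j) : a < b := by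
  have hNk : (0 : ℝ) < (N : ℝ) ^ k := by positivity
  have hij' : (i : ℝ) + 2 ≤ j := by exact_mod_cast hij
  rw [gridCell, mem_Icc, le_div_iff₀ hNk] at ha
  rw [gridCell, mem_Icc, div_le_iff₀ hNk] at hb
  exact lt_of_mul_lt_mul_right (by linarith [ha.2, hb.1]) hNk.le

lemma gridCount_le_three_mul_add_two (hN : 0 < N)
    (h : ∀ a ∈ A, ∀ a' ∈ A, a < a' → ∃ z ∈ B, a ≤ z ∧ z ≤ a') :
    gridCount N k A ≤ 3 * gridCount N k B + 2 := by
  rw [gridCount_eq_card_gridIndices, gridCount_eq_card_gridIndices]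
  refine Finset.card_le_three_mul_add_two fun i hi j hj hij => ?_
  simp only [gridIndices, Finset.mem_filter, Finset.mem_Icc] at hi hj
  obtain ⟨⟨hi1, -⟩, a, haA, ha⟩ := hi
  obtain ⟨⟨-, hjN⟩, a', ha'A, ha'⟩ := hj
  obtain ⟨z, hzB, haz, hza'⟩ := h a haA a' ha'A (lt_of_mem_gridCell hN ha ha' hij)
  obtain ⟨l, hil, hlj, hzl⟩ :=
    exists_mem_gridCell hN hi1 (by omega) ⟨ha.1.trans haz, hza'.trans ha'.2⟩
  refine ⟨l, ?_, hil, hlj⟩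
  simp only [gridIndices, Finset.mem_filter, Finset.mem_Icc]
  exact ⟨⟨hi1.trans hil, hlj.trans hjN⟩, z, hzB, hzl⟩

end Grid

lemma Real.log_natCast_le_log_two_mul_add_log {a b c : ℕ} (h : a ≤ c * b + c) :
    Real.log a ≤ Real.log (2 * c : ℕ) + Real.log b := by
  rcases Nat.eq_zero_or_pos a with rfl | ha
  · simpa using add_nonneg (Real.log_natCast_nonneg (2 * c)) (Real.log_natCast_nonneg b)
  have hc : 0 < c := by
    rcases Nat.eq_zero_or_pos c with rfl | hc
    · omega
    · exact hc
  rcases Nat.eq_zero_or_pos b with rfl | hb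
  · simp only [Nat.cast_zero, Real.log_zero, add_zero]
    exact Real.log_le_log (by exact_mod_cast ha) (by exact_mod_cast (by omega : a ≤ 2 * c))
  · rw [← Real.log_mul (by positivity) (by positivity)]
    refine Real.log_le_log (by exact_mod_cast ha) ?_
    exact_mod_cast (show a ≤ 2 * c * b by nlinarith)

noncomputable def dyadicRatio (A : Set ℝ) (k : ℕ) : ℝ :=
  Real.log (gridCount 2 k A) / (k * Real.log 2)

section Dimension

open scoped Topology

variable {A B : Set ℝ}

lemma dyadicRatio_nonneg (k : ℕ) : 0 ≤ dyadicRatio A k :=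
  div_nonneg (Real.log_natCast_nonneg _) (by positivity)

lemma dyadicRatio_le_one (k : ℕ) : dyadicRatio A k ≤ 1 := by
  rcases Nat.eq_zero_or_pos k with rfl | hk
  · simp [dyadicRatio]
  rw [dyadicRatio, div_le_one (by positivity), ← Real.log_pow]
  rcases Nat.eq_zero_or_pos (gridCount 2 k A) with h0 | hpos
  · rw [h0, Nat.cast_zero, Real.log_zero]
    exact Real.log_nonneg (one_le_pow₀ one_le_two)
  · exact Real.log_le_log (by exact_mod_cast hpos) (by exact_mod_cast gridCount_le_pow)

lemma ubDim_le_of_gridCount_le {c : ℕ} (h : ∀ k, gridCount 2 k A ≤ c * gridCount 2 k B + c) :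
    ubDim A ≤ ubDim B := by
  set w : ℕ → ℝ := fun k => Real.log (2 * c : ℕ) / (k * Real.log 2)
  have hw : Tendsto w atTop (𝓝 0) :=
    tendsto_const_nhds.div_atTop
      (tendsto_natCast_atTop_atTop.atTop_mul_const (Real.log_pos one_lt_two))
  have hle : ∀ k, dyadicRatio A k ≤ dyadicRatio B k + w k := fun k => by
    simp only [dyadicRatio, w, ← add_div]
    exact div_le_div_of_nonneg_right
      (by linarith [Real.log_natCast_le_log_two_mul_add_log (h k)]) (by positivity)
  have hB_above : IsBoundedUnder (· ≤ ·) atTop (dyadicRatio B) :=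
    isBoundedUnder_of ⟨1, dyadicRatio_le_one⟩
  have hB_below : IsBoundedUnder (· ≥ ·) atTop (dyadicRatio B) :=
    isBoundedUnder_of ⟨0, dyadicRatio_nonneg⟩
  calc ubDim A ≤ limsup (dyadicRatio B + w) atTop :=
        limsup_le_limsup (Eventually.of_forall hle)
          (isCoboundedUnder_le_of_le atTop dyadicRatio_nonneg)
          (isBoundedUnder_le_add hB_above hw.isBoundedUnder_le)
    _ ≤ limsup (dyadicRatio B) atTop + limsup w atTop :=
        limsup_add_le hB_below hB_above hw.isCoboundedUnder_le hw.isBoundedUnder_le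
    _ = ubDim B := by rw [hw.limsup_eq, add_zero]; rfl

end Dimension

def SlopeMonotoneOn (f : ℝ → ℝ) (A : Set ℝ) : Prop :=
  ∀ ⦃a b c d : ℝ⦄, a ∈ A → b ∈ A → c ∈ A → d ∈ A → a < b → c < d → a ≤ c → b ≤ d →
    slope f a b ≤ slope f c d

def MeanValueProperty (f g : ℝ → ℝ) (A : Set ℝ) : Prop :=
  ∀ ⦃u v : ℝ⦄, u ∈ A → v ∈ A → u < v → ∃ ξ ∈ Ioo u v, g ξ = slope f u v

def gapPoints (f g : ℝ → ℝ) (A : Set ℝ) : Set ℝ :=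
  {ξ | ∃ u ∈ A, ∃ v ∈ A, ξ ∈ Ioo u v ∧ Disjoint (Ioo u v) A ∧ g ξ = slope f u v}

section Slopes

variable {f g : ℝ → ℝ} {A : Set ℝ}

lemma ConvexRestr.slopeMonotoneOn (hf : ConvexRestr f A) : SlopeMonotoneOn f A := by
  obtain ⟨h, hconv, heq⟩ := hf
  intro a b c d ha hb hc hd hab hcd hac hbd
  have hslope : ∀ ⦃x y⦄, x ∈ A → y ∈ A → slope f x y = slope h x y := fun x y hx hy => by
    rw [slope_def_field, slope_def_field, heq hx, heq hy]
  have hull := subset_convexHull ℝ A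
  have had : a < d := hab.trans_le hbd
  rw [hslope ha hb, hslope hc hd]
  calc slope h a b ≤ slope h a d :=
        hconv.slope_mono (hull ha) ⟨hull hb, hab.ne'⟩ ⟨hull hd, had.ne'⟩ hbd
    _ = slope h d a := slope_comm h a d
    _ ≤ slope h d c := hconv.slope_mono (hull hd) ⟨hull ha, had.ne⟩ ⟨hull hc, hcd.ne⟩ hac
    _ = slope h c d := slope_comm h d c

lemma ConcaveRestr.neg (hf : ConcaveRestr f A) : ConvexRestr (-f) A := by
  obtain ⟨h, hconc, heq⟩ := hf
  exact ⟨-h, hconc.neg, fun x hx => by simp [heq hx]⟩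

lemma MeanValueProperty.mono {B : Set ℝ} (hmvt : MeanValueProperty f g B) (hAB : A ⊆ B) :
    MeanValueProperty f g A :=
  fun _ _ hu hv huv => hmvt (hAB hu) (hAB hv) huv

lemma meanValueProperty_integral {p q : ℝ} (hg : ContinuousOn g (Icc p q))
    (hf : ∀ x, f x = ∫ t in p..x, g t) : MeanValueProperty f g (Icc p q) := by
  intro u v hu hv huv
  have hpq : p ≤ q := hu.1.trans hu.2
  have hf_eq : f = fun x => ∫ t in p..x, g t := funext hf
  have hcont : ContinuousOn f (Icc p q) := by
    simpa [hf_eq, uIcc_of_le hpq] using intervalIntegral.continuousOn_primitive_interval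
      (μ := volume) (hg.integrableOn_Icc.mono_set (uIcc_of_le hpq).subset)
  have hderiv : ∀ x ∈ Ioo u v, HasDerivAt f (g x) x := by
    intro x hx
    have hx' : x ∈ Ioo p q := ⟨hu.1.trans_lt hx.1, hx.2.trans_le hv.2⟩
    rw [hf_eq]
    exact intervalIntegral.integral_hasDerivAt_right
      ((hg.mono (uIcc_subset_Icc (left_mem_Icc.mpr hpq) ⟨hx'.1.le, hx'.2.le⟩)).intervalIntegrable)
      ((hg.mono Ioo_subset_Icc_self).stronglyMeasurableAtFilter isOpen_Ioo x hx')
      (hg.continuousAt (Icc_mem_nhds hx'.1 hx'.2))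
  obtain ⟨ξ, hξ, hgξ⟩ :=
    exists_hasDerivAt_eq_slope f g huv (hcont.mono (Icc_subset_Icc hu.1 hv.2)) hderiv
  exact ⟨ξ, hξ, hgξ.trans (slope_def_field f u v).symm⟩

end Slopes

section DerivedSet

variable {f g : ℝ → ℝ} {A : Set ℝ} {p q x : ℝ}

/-- The last clause lets the slope comparisons below use `x` itself as an endpoint when `x ∈ A`. -/
lemma exists_pair_near_of_mem_derivedSet (hx : x ∈ derivedSet A) {l r : ℝ} (hl : l < x)
    (hr : x < r) :
    ∃ u ∈ A, ∃ v ∈ A, u < v ∧ l < u ∧ v < r ∧ (x ∈ A → u ≤ x ∧ x ≤ v) := by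
  obtain ⟨w, ⟨hw, hwA⟩, hwx⟩ := accPt_iff_nhds.mp hx _ (Ioo_mem_nhds hl hr)
  by_cases hxA : x ∈ A
  · rcases hwx.lt_or_gt with hwx | hwx
    · exact ⟨w, hwA, x, hxA, hwx, hw.1, hr, fun _ => ⟨hwx.le, le_rfl⟩⟩
    · exact ⟨x, hxA, w, hwA, hwx, hl, hw.2, fun _ => ⟨le_rfl, hwx.le⟩⟩
  · obtain ⟨w', ⟨⟨hw', hww'⟩, hw'A⟩, -⟩ := accPt_iff_nhds.mp hx _
      (inter_mem (Ioo_mem_nhds hl hr) (isOpen_compl_singleton.mem_nhds hwx.symm))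
    rcases Ne.lt_or_gt hww' with h | h
    · exact ⟨w', hw'A, w, hwA, h, hw'.1, hw.2, fun h => absurd h hxA⟩
    · exact ⟨w, hwA, w', hw'A, h, hw.1, hw'.2, fun h => absurd h hxA⟩

lemma notMem_Ioo_of_mem_derivedSet (hx : x ∈ derivedSet A) {u v : ℝ}
    (hgap : Disjoint (Ioo u v) A) : x ∉ Ioo u v := fun hxuv => by
  obtain ⟨w, hw, -⟩ := accPt_iff_nhds.mp hx _ (isOpen_Ioo.mem_nhds hxuv)
  exact hgap.notMem_of_mem_left hw.1 hw.2

lemma derivedSet_subset_Icc (hA : A ⊆ Icc p q) : derivedSet A ⊆ Icc p q :=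
  (derivedSet_subset_closure A).trans (isClosed_Icc.closure_subset_iff.mpr hA)

lemma gapPoints_subset_Icc (hA : A ⊆ Icc p q) : gapPoints f g A ⊆ Icc p q := by
  rintro ξ ⟨u, hu, v, hv, hξ, -⟩
  exact Icc_subset_Icc (hA hu).1 (hA hv).2 (Ioo_subset_Icc_self hξ)

lemma MeanValueProperty.exists_abs_slope_sub_lt (hmvt : MeanValueProperty f g A)
    (hA : A ⊆ Icc p q) (hg : ContinuousOn g (Icc p q)) (hx : x ∈ Icc p q) {ε : ℝ} (hε : 0 < ε) :
    ∃ δ > 0, ∀ ⦃u v : ℝ⦄, u ∈ A → v ∈ A → u < v → x - δ < u → v < x + δ →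
      |slope f u v - g x| < ε := by
  obtain ⟨δ, hδ, hcont⟩ := Metric.continuousWithinAt_iff.mp (hg x hx) ε hε
  refine ⟨δ, hδ, fun u v hu hv huv hxu hvx => ?_⟩
  obtain ⟨ξ, hξ, hgξ⟩ := hmvt hu hv huv
  have hξpq : ξ ∈ Icc p q := Icc_subset_Icc (hA hu).1 (hA hv).2 (Ioo_subset_Icc_self hξ)
  rw [← hgξ, ← Real.dist_eq]
  exact hcont hξpq (by rw [Real.dist_eq, abs_lt]; constructor <;> linarith [hξ.1, hξ.2])

lemma MeanValueProperty.exists_mem_derivedSet_union_gapPoints (hmvt : MeanValueProperty f g A)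
    {a a' : ℝ} (ha : a ∈ A) (ha' : a' ∈ A) (haa' : a < a') :
    ∃ z ∈ derivedSet A ∪ gapPoints f g A, a ≤ z ∧ z ≤ a' := by
  by_cases hinf : (A ∩ Icc a a').Infinite
  · obtain ⟨z, hz, hacc⟩ :=
      hinf.exists_accPt_of_subset_isCompact isCompact_Icc inter_subset_right
    exact ⟨z, Or.inl (hacc.mono (principal_mono.mpr inter_subset_left)), hz⟩
  · obtain ⟨v, ⟨hvA, hav, hva'⟩, hmin⟩ := (A ∩ Ioc a a').exists_min_image id
      ((Set.not_infinite.mp hinf).subset (inter_subset_inter_right _ Ioc_subset_Icc_self))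
      ⟨a', ha', haa', le_rfl⟩
    have hgap : Disjoint (Ioo a v) A := disjoint_left.mpr fun t ht htA =>
      (hmin t ⟨htA, ht.1, ht.2.le.trans hva'⟩).not_gt ht.2
    obtain ⟨ξ, hξ, hgξ⟩ := hmvt ha hvA hav
    exact ⟨ξ, Or.inr ⟨a, ha, v, hvA, hξ, hgap, hgξ⟩, hξ.1.le, hξ.2.le.trans hva'⟩

variable (hslope : SlopeMonotoneOn f A) (hmvt : MeanValueProperty f g A) (hA : A ⊆ Icc p q)
  (hg : ContinuousOn g (Icc p q))

include hslope hmvt hA hg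

lemma slope_le_of_mem_derivedSet (hx : x ∈ derivedSet A) {a b : ℝ} (ha : a ∈ A) (hb : b ∈ A)
    (hab : a < b) (hbx : b ≤ x) : slope f a b ≤ g x := by
  refine le_of_forall_pos_lt_add fun ε hε => ?_
  obtain ⟨δ, hδ, hnear⟩ :=
    hmvt.exists_abs_slope_sub_lt hA hg (derivedSet_subset_Icc hA hx) hε
  obtain ⟨u, hu, v, hv, huv, hδu, hvδ, hau, hbv⟩ :
      ∃ u ∈ A, ∃ v ∈ A, u < v ∧ x - δ < u ∧ v < x + δ ∧ a ≤ u ∧ b ≤ v := by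
    rcases hbx.lt_or_eq with hbx | rfl
    · obtain ⟨u, hu, v, hv, huv, hlu, hvr, -⟩ := exists_pair_near_of_mem_derivedSet hx
        (max_lt (show x - δ < x by linarith) hbx) (by linarith : x < x + δ)
      have := max_lt_iff.mp hlu
      exact ⟨u, hu, v, hv, huv, this.1, hvr, by linarith, by linarith⟩
    · obtain ⟨u, hu, v, hv, huv, hlu, hvr, hbuv⟩ := exists_pair_near_of_mem_derivedSet hx
        (max_lt (show b - δ < b by linarith) hab) (by linarith : b < b + δ)
      have := max_lt_iff.mp hlu
      exact ⟨u, hu, v, hv, huv, this.1, hvr, this.2.le, (hbuv hb).2⟩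
  calc slope f a b ≤ slope f u v := hslope ha hb hu hv hab huv hau hbv
    _ < g x + ε := by linarith [(abs_lt.mp (hnear hu hv huv hδu hvδ)).2]

lemma le_slope_of_mem_derivedSet (hx : x ∈ derivedSet A) {c d : ℝ} (hc : c ∈ A) (hd : d ∈ A)
    (hcd : c < d) (hxc : x ≤ c) : g x ≤ slope f c d := by
  refine le_of_forall_pos_lt_add fun ε hε => ?_
  obtain ⟨δ, hδ, hnear⟩ :=
    hmvt.exists_abs_slope_sub_lt hA hg (derivedSet_subset_Icc hA hx) hε
  obtain ⟨u, hu, v, hv, huv, hδu, hvδ, huc, hvd⟩ :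
      ∃ u ∈ A, ∃ v ∈ A, u < v ∧ x - δ < u ∧ v < x + δ ∧ u ≤ c ∧ v ≤ d := by
    rcases hxc.lt_or_eq with hxc | rfl
    · obtain ⟨u, hu, v, hv, huv, hlu, hvr, -⟩ := exists_pair_near_of_mem_derivedSet hx
        (by linarith : x - δ < x) (lt_min (show x < x + δ by linarith) hxc)
      have := lt_min_iff.mp hvr
      exact ⟨u, hu, v, hv, huv, hlu, this.1, by linarith, by linarith⟩
    · obtain ⟨u, hu, v, hv, huv, hlu, hvr, hxuv⟩ := exists_pair_near_of_mem_derivedSet hx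
        (by linarith : x - δ < x) (lt_min (show x < x + δ by linarith) hcd)
      have := lt_min_iff.mp hvr
      exact ⟨u, hu, v, hv, huv, hlu, this.1, (hxuv hc).1, this.2.le⟩
  calc g x < slope f u v + ε := by linarith [(abs_lt.mp (hnear hu hv huv hδu hvδ)).1]
    _ ≤ slope f c d + ε := by gcongr; exact hslope hu hv hc hd huv hcd huc hvd

lemma apply_le_apply_of_mem_derivedSet (hx : x ∈ derivedSet A) {y : ℝ} (hy : y ∈ derivedSet A)
    (hxy : x < y) : g x ≤ g y := by
  refine le_of_forall_pos_lt_add fun ε hε => ?_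
  obtain ⟨δ, hδ, hnear⟩ :=
    hmvt.exists_abs_slope_sub_lt hA hg (derivedSet_subset_Icc hA hx) hε
  obtain ⟨u, hu, v, hv, huv, hlu, hvr, -⟩ := exists_pair_near_of_mem_derivedSet hx
    (by linarith : x - δ < x) (lt_min (show x < x + δ by linarith) hxy)
  have := lt_min_iff.mp hvr
  calc g x < slope f u v + ε := by linarith [(abs_lt.mp (hnear hu hv huv hlu this.1)).1]
    _ ≤ g y + ε := by
      gcongr; exact slope_le_of_mem_derivedSet hslope hmvt hA hg hy hu hv huv this.2.le

lemma monotoneOn_derivedSet_union_gapPoints : MonotoneOn g (derivedSet A ∪ gapPoints f g A) := by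
  intro x hx y hy hxy
  rcases hxy.eq_or_lt with rfl | hxy
  · exact le_rfl
  rcases hx with hx | ⟨u, hu, v, hv, hxuv, hgap, hgx⟩ <;>
    rcases hy with hy | ⟨c, hc, d, hd, hycd, hgap', hgy⟩
  · exact apply_le_apply_of_mem_derivedSet hslope hmvt hA hg hx hy hxy
  · have hxc : x ≤ c := not_lt.mp fun hcx =>
      notMem_Ioo_of_mem_derivedSet hx hgap' ⟨hcx, hxy.trans hycd.2⟩
    rw [hgy]
    exact le_slope_of_mem_derivedSet hslope hmvt hA hg hx hc hd (hycd.1.trans hycd.2) hxc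
  · have hvy : v ≤ y := not_lt.mp fun hyv =>
      notMem_Ioo_of_mem_derivedSet hy hgap ⟨hxuv.1.trans hxy, hyv⟩
    rw [hgx]
    exact slope_le_of_mem_derivedSet hslope hmvt hA hg hy hu hv (hxuv.1.trans hxuv.2) hvy
  · have huc : u ≤ c := not_lt.mp fun hcu =>
      hgap'.notMem_of_mem_right hu ⟨hcu, hxuv.1.trans (hxy.trans hycd.2)⟩
    have hvd : v ≤ d := not_lt.mp fun hdv =>
      hgap.notMem_of_mem_right hd ⟨hxuv.1.trans (hxy.trans hycd.2), hdv⟩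
    rw [hgx, hgy]
    exact hslope hu hv hc hd (hxuv.1.trans hxuv.2) (hycd.1.trans hycd.2) huc hvd

end DerivedSet

lemma ConvexRestr.exists_monotoneOn_ubDim_le {f g : ℝ → ℝ} {A : Set ℝ} {p q : ℝ}
    (hf : ConvexRestr f A) (hA : A ⊆ Icc p q) (hg : ContinuousOn g (Icc p q))
    (hfg : ∀ x, f x = ∫ t in p..x, g t) :
    ∃ B ⊆ Icc p q, MonotoneOn g B ∧ ubDim A ≤ ubDim B := by
  have hmvt := (meanValueProperty_integral hg hfg).mono hA
  refine ⟨derivedSet A ∪ gapPoints f g A,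
    union_subset (derivedSet_subset_Icc hA) (gapPoints_subset_Icc hA),
    monotoneOn_derivedSet_union_gapPoints hf.slopeMonotoneOn hmvt hA hg,
    ubDim_le_of_gridCount_le (c := 3) fun k => ?_⟩
  have := gridCount_le_three_mul_add_two (k := k) two_pos fun _ ha _ ha' haa' =>
    hmvt.exists_mem_derivedSet_union_gapPoints ha ha' haa'
  omega

theorem stmt0_general (α : ℝ)
    (g f : ℝ → ℝ) (hg : ContinuousOn g (Set.Icc 0 1))
    (hf : ∀ x, f x = ∫ t in (0 : ℝ)..x, g t)
    (hmono : ∀ B ⊆ Set.Icc (0 : ℝ) 1, ubDim B > α →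
      ¬ MonotoneOn g B ∧ ¬ AntitoneOn g B) :
    ∀ A ⊆ Set.Icc (0 : ℝ) 1, ubDim A > α →
      ¬ ConvexRestr f A ∧ ¬ ConcaveRestr f A := by
  intro A hA hdim
  constructor
  · intro hconv
    obtain ⟨B, hB, hgB, hAB⟩ := hconv.exists_monotoneOn_ubDim_le hA hg hf
    exact (hmono B hB (hdim.trans_le hAB)).1 hgB
  · intro hconc
    have hf' : ∀ x, (-f) x = ∫ t in (0 : ℝ)..x, (-g) t := fun x => by
      simp [hf x, intervalIntegral.integral_neg]
    obtain ⟨B, hB, hgB, hAB⟩ := hconc.neg.exists_monotoneOn_ubDim_le hA hg.neg hf'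
    exact (hmono B hB (hdim.trans_le hAB)).2 (by simpa using hgB.neg)

/-- If `g` is continuous on `[0,1]`, `f x = ∫₀ˣ g`, and `g` is not monotone on any
`B ⊆ [0,1]` of upper box dimension `> α ∈ [0,1]`, then `f` is neither convex nor
concave on any `A ⊆ [0,1]` of upper box dimension `> α`. -/
theorem stmt0 (α : ℝ) (hα : α ∈ Set.Icc (0 : ℝ) 1)
    (g f : ℝ → ℝ) (hg : ContinuousOn g (Set.Icc 0 1))
    (hf : ∀ x, f x = ∫ t in (0 : ℝ)..x, g t)
    (hmono : ∀ B ⊆ Set.Icc (0 : ℝ) 1, ubDim B > α →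
      ¬ MonotoneOn g B ∧ ¬ AntitoneOn g B) :
    ∀ A ⊆ Set.Icc (0 : ℝ) 1, ubDim A > α →
      ¬ ConvexRestr f A ∧ ¬ ConcaveRestr f A :=
  stmt0_general α g f hg hf hmono
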